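/- Let X be a topological vector space, T : X → X a continuous linear operator, and λ a scalar with |λ| = 1. Then T and λT have the same uniformly recurrent vectors, the same frequently recurrent vectors, the same upper frequently recurrent vectors, and the same reiteratively recurrent vectors. In particular, if T is uniformly recurrent (frequently recurrent, upper frequently recurrent, reiteratively recurrent) then so is λT. -/

import Mathlib

open Filter Topology Set

noncomputable def lowerDensity (A : Set ℕ) : ℝ :=
  Filter.atTop.liminf fun N : ℕ => ((A ∩ Set.Iic N).ncard : ℝ) / (N + 1)

noncomputable def upperDensity (A : Set ℕ) : ℝ :=
  Filter.atTop.limsup fun N : ℕ => ((A ∩ Set.Iic N).ncard : ℝ) / (N + 1)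

noncomputable def upperBanachDensity (A : Set ℕ) : ℝ :=
  Filter.atTop.limsup fun N : ℕ =>
    ⨆ m : ℕ, (((A ∩ Set.Icc m (m + N)).ncard : ℝ) / (N + 1))

/-- A set of naturals is syndetic if it has bounded gaps. -/
def Syndetic (A : Set ℕ) : Prop :=
  ∃ m : ℕ, ∀ n : ℕ, ∃ k ∈ A, n ≤ k ∧ k < n + m

/-- A set of naturals is an IP-set if it contains all finite sums of distinct terms of some
strictly increasing sequence of positive integers. -/
def IsIPSet (A : Set ℕ) : Prop :=
  ∃ k : ℕ → ℕ, StrictMono k ∧ (∀ i, 0 < k i) ∧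
    ∀ s : Finset ℕ, s.Nonempty → (∑ j ∈ s, k j) ∈ A

/-- A set of naturals is an IP*-set if it meets every IP-set. -/
def IsIPStarSet (A : Set ℕ) : Prop :=
  ∀ B : Set ℕ, IsIPSet B → (A ∩ B).Nonempty

/-- The return set N(x,U) = {n : T^n x ∈ U}. -/
def returnSet {X : Type*} (T : X → X) (x : X) (U : Set X) : Set ℕ :=
  {n : ℕ | T^[n] x ∈ U}

def IsRecurrentVec {X : Type*} [TopologicalSpace X] (T : X → X) (x : X) : Prop :=
  ∀ U ∈ nhds x, (returnSet T x U).Infinite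

def IsUniformlyRecurrentVec {X : Type*} [TopologicalSpace X] (T : X → X) (x : X) : Prop :=
  ∀ U ∈ nhds x, Syndetic (returnSet T x U)

def IsFrequentlyRecurrentVec {X : Type*} [TopologicalSpace X] (T : X → X) (x : X) : Prop :=
  ∀ U ∈ nhds x, 0 < lowerDensity (returnSet T x U)

def IsUpperFrequentlyRecurrentVec {X : Type*} [TopologicalSpace X] (T : X → X) (x : X) : Prop :=
  ∀ U ∈ nhds x, 0 < upperDensity (returnSet T x U)

def IsReiterativelyRecurrentVec {X : Type*} [TopologicalSpace X] (T : X → X) (x : X) : Prop :=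
  ∀ U ∈ nhds x, 0 < upperBanachDensity (returnSet T x U)

def IsIPStarRecurrentVec {X : Type*} [TopologicalSpace X] (T : X → X) (x : X) : Prop :=
  ∀ U ∈ nhds x, IsIPStarSet (returnSet T x U)

def IsHypercyclicVec {X : Type*} [TopologicalSpace X] (T : X → X) (x : X) : Prop :=
  Dense (Set.range fun n : ℕ => T^[n] x)

def IsFrequentlyHypercyclicVec {X : Type*} [TopologicalSpace X] (T : X → X) (x : X) : Prop :=
  ∀ U : Set X, IsOpen U → U.Nonempty → 0 < lowerDensity (returnSet T x U)

def IsUpperFrequentlyHypercyclicVec {X : Type*} [TopologicalSpace X] (T : X → X) (x : X) : Prop :=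
  ∀ U : Set X, IsOpen U → U.Nonempty → 0 < upperDensity (returnSet T x U)

def IsReiterativelyHypercyclicVec {X : Type*} [TopologicalSpace X] (T : X → X) (x : X) : Prop :=
  ∀ U : Set X, IsOpen U → U.Nonempty → 0 < upperBanachDensity (returnSet T x U)

/-- Power boundedness: the iterates form an equicontinuous family (at zero). -/
def PowerBounded {X : Type*} [Zero X] [TopologicalSpace X] (T : X → X) : Prop :=
  ∀ W₁ ∈ nhds (0 : X), ∃ W₂ ∈ nhds (0 : X), ∀ n : ℕ, ∀ x ∈ W₂, T^[n] x ∈ W₁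

/-- The cut-shift-and-paste property for a family of subsets of ℕ. -/
def CuSP (F : Set ℕ → Prop) : Prop :=
  ∀ q : ℕ, 0 < q → ∀ I : Fin q → Set ℕ, (⋃ j, I j) = Set.univ →
    ∀ shift : Fin q → ℕ, ∀ A : Set ℕ, F A →
      F (⋃ j, (fun k => shift j + k) '' (A ∩ I j))

/-!
Let `D = returnPhases T a x` be the set of limit values of `aⁿ` as `n` runs through the return
times of `x` to its neighbourhoods. Continuity of `T` makes `D` a closed subsemigroup of the unit
circle, hence a subgroup. If `n` is a return time of `x` to a small neighbourhood, then `aⁿ` is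
close to some `d ∈ D`, and a return time `s` with `aˢ ≈ d⁻¹` makes `n + s` a return time of `x`
to `U` under `aT`; by compactness of `D` finitely many `s` suffice. So every return set of `aT`
contains a bounded forward shift of a return set of `T`, and syndeticity and positivity of the
lower, upper and upper Banach densities all survive bounded forward shifts (a shift by at most
`g` costs a factor at most `(g + 1)²` in density). The converse applies this to `a⁻¹ (aT) = T`.
-/

def BddShiftClosed (F : Set ℕ → Prop) : Prop :=
  ∀ (g : ℕ) (A B : Set ℕ), F A → (∀ n ∈ A, ∃ k ≤ g, n + k ∈ B) → F B

theorem syndetic_bddShiftClosed : BddShiftClosed Syndetic := by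
  rintro g A B ⟨m, hm⟩ hAB
  refine ⟨m + g, fun n => ?_⟩
  obtain ⟨k, hkA, hnk, hkm⟩ := hm n
  obtain ⟨j, hjg, hkj⟩ := hAB k hkA
  exact ⟨k + j, hkj, by omega, by omega⟩

section LimitComparison

variable {u v : ℕ → ℝ} {C : ℝ} {g : ℕ}

theorem liminf_le_mul_liminf_of_le_nat_add (hC : 0 ≤ C) (hu : ∀ N, 0 ≤ u N)
    (hv₀ : ∀ N, 0 ≤ v N) (hv₁ : ∀ N, v N ≤ 1) (huv : ∀ N, u N ≤ C * v (N + g)) :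
    liminf u atTop ≤ C * liminf v atTop := by
  calc liminf u atTop ≤ liminf (fun N => C * v (N + g)) atTop :=
        liminf_le_liminf (.of_forall huv) (isBoundedUnder_of ⟨0, hu⟩)
          (isCoboundedUnder_ge_of_le _ fun N => mul_le_of_le_one_right hC (hv₁ _))
    _ = C * liminf (fun N => v (N + g)) atTop :=
        ((monotone_mul_left_of_nonneg hC).map_liminf_of_continuousAt _
          (continuous_const_mul C).continuousAt (isCoboundedUnder_ge_of_le _ fun N => hv₁ _)
          (isBoundedUnder_of ⟨0, fun N => hv₀ _⟩)).symm
    _ = C * liminf v atTop := by rw [liminf_nat_add]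

theorem limsup_le_mul_limsup_of_le_nat_add (hC : 0 ≤ C) (hu : ∀ N, 0 ≤ u N)
    (hv₀ : ∀ N, 0 ≤ v N) (hv₁ : ∀ N, v N ≤ 1) (huv : ∀ N, u N ≤ C * v (N + g)) :
    limsup u atTop ≤ C * limsup v atTop := by
  calc limsup u atTop ≤ limsup (fun N => C * v (N + g)) atTop :=
        limsup_le_limsup (.of_forall huv) (isCoboundedUnder_le_of_le _ hu)
          (isBoundedUnder_of ⟨C, fun N => mul_le_of_le_one_right hC (hv₁ _)⟩)
    _ = C * limsup (fun N => v (N + g)) atTop :=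
        ((monotone_mul_left_of_nonneg hC).map_limsup_of_continuousAt _
          (continuous_const_mul C).continuousAt (isBoundedUnder_of ⟨1, fun N => hv₁ _⟩)
          (isCoboundedUnder_le_of_le _ fun N => hv₀ _)).symm
    _ = C * limsup v atTop := by rw [limsup_nat_add]

end LimitComparison

section Density

variable {A B : Set ℕ} {g : ℕ}

theorem ncard_inter_Icc_le_mul_of_bddShift (hAB : ∀ n ∈ A, ∃ k ≤ g, n + k ∈ B) (m N : ℕ) :
    (A ∩ Icc m (m + N)).ncard ≤ (g + 1) * (B ∩ Icc m (m + N + g)).ncard := by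
  classical
  choose! σ hσg hσB using hAB
  have hA : A ∩ Icc m (m + N) = ↑((Finset.Icc m (m + N)).filter (· ∈ A)) := by
    ext n; simp [and_comm]
  have hB : B ∩ Icc m (m + N + g) = ↑((Finset.Icc m (m + N + g)).filter (· ∈ B)) := by
    ext n; simp [and_comm]
  rw [hA, hB, ncard_coe_finset, ncard_coe_finset]
  refine (Finset.card_le_mul_card_image (f := fun n => n + σ n) _ (g + 1) fun b _ => ?_).trans
    (Nat.mul_le_mul_left _ (Finset.card_le_card fun b hb => ?_))
  · -- the fibre of `n ↦ n + σ n` over `b` lies in `[b - g, b]`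
    refine (Finset.card_le_card fun n hn => ?_).trans
      ((Nat.card_Icc (b - g) b).trans_le (by omega))
    simp only [Finset.mem_filter] at hn
    have := hσg n hn.1.2
    simp only [Finset.mem_Icc]
    omega
  · obtain ⟨n, hn, rfl⟩ := Finset.mem_image.1 hb
    simp only [Finset.mem_filter, Finset.mem_Icc] at hn ⊢
    have := hσg n hn.2
    exact ⟨by omega, hσB n hn.2⟩

theorem ncard_inter_Icc_div_le (hAB : ∀ n ∈ A, ∃ k ≤ g, n + k ∈ B) (m N : ℕ) :
    ((A ∩ Icc m (m + N)).ncard : ℝ) / (N + 1) ≤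
      (g + 1) ^ 2 * (((B ∩ Icc m (m + (N + g))).ncard : ℝ) / ((N + g : ℕ) + 1)) := by
  have hcount : ((A ∩ Icc m (m + N)).ncard : ℝ) ≤ (g + 1) * (B ∩ Icc m (m + (N + g))).ncard := by
    rw [← add_assoc]; exact_mod_cast ncard_inter_Icc_le_mul_of_bddShift hAB m N
  have hlen : ((N + g : ℕ) : ℝ) + 1 ≤ (g + 1) * (N + 1) := by push_cast; nlinarith
  calc _ ≤ (g + 1) * ((B ∩ Icc m (m + (N + g))).ncard : ℝ) / (N + 1) := by gcongr
    _ = (g + 1) ^ 2 * (((B ∩ Icc m (m + (N + g))).ncard : ℝ) / ((g + 1) * (N + 1))) := by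
      field_simp
    _ ≤ _ := by gcongr

theorem ncard_inter_Icc_div_le_one (A : Set ℕ) (m N : ℕ) :
    ((A ∩ Icc m (m + N)).ncard : ℝ) / (N + 1) ≤ 1 := by
  rw [div_le_one (by positivity)]
  have hIcc : (Icc m (m + N)).ncard = N + 1 := by simp; omega
  exact_mod_cast hIcc ▸ ncard_le_ncard inter_subset_right (finite_Icc _ _)

theorem inter_Iic_eq_inter_Icc_zero (A : Set ℕ) (N : ℕ) : A ∩ Iic N = A ∩ Icc 0 (0 + N) := by
  ext n; simp

theorem lowerDensity_le_mul (hAB : ∀ n ∈ A, ∃ k ≤ g, n + k ∈ B) :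
    lowerDensity A ≤ (g + 1) ^ 2 * lowerDensity B := by
  simp only [lowerDensity, inter_Iic_eq_inter_Icc_zero]
  refine liminf_le_mul_liminf_of_le_nat_add (g := g) (by positivity) (fun N => by positivity)
    (fun N => by positivity) (fun N => ncard_inter_Icc_div_le_one B 0 N) fun N => ?_
  exact_mod_cast ncard_inter_Icc_div_le hAB 0 N

theorem upperDensity_le_mul (hAB : ∀ n ∈ A, ∃ k ≤ g, n + k ∈ B) :
    upperDensity A ≤ (g + 1) ^ 2 * upperDensity B := by
  simp only [upperDensity, inter_Iic_eq_inter_Icc_zero]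
  refine limsup_le_mul_limsup_of_le_nat_add (g := g) (by positivity) (fun N => by positivity)
    (fun N => by positivity) (fun N => ncard_inter_Icc_div_le_one B 0 N) fun N => ?_
  exact_mod_cast ncard_inter_Icc_div_le hAB 0 N

theorem upperBanachDensity_le_mul (hAB : ∀ n ∈ A, ∃ k ≤ g, n + k ∈ B) :
    upperBanachDensity A ≤ (g + 1) ^ 2 * upperBanachDensity B := by
  have hbdd (N : ℕ) : BddAbove (range fun m => ((B ∩ Icc m (m + N)).ncard : ℝ) / (N + 1)) :=
    ⟨1, forall_mem_range.2 fun m => ncard_inter_Icc_div_le_one B m N⟩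
  refine limsup_le_mul_limsup_of_le_nat_add (g := g) (by positivity)
    (fun N => Real.iSup_nonneg fun m => by positivity)
    (fun N => Real.iSup_nonneg fun m => by positivity)
    (fun N => ciSup_le fun m => ncard_inter_Icc_div_le_one B m N) fun N => ciSup_le fun m => ?_
  exact (ncard_inter_Icc_div_le hAB m N).trans (by gcongr; exact le_ciSup (hbdd (N + g)) m)

end Density

theorem lowerDensity_bddShiftClosed : BddShiftClosed (0 < lowerDensity ·) :=
  fun _ _ _ hA hAB => pos_of_mul_pos_right (hA.trans_le (lowerDensity_le_mul hAB)) (by positivity)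

theorem upperDensity_bddShiftClosed : BddShiftClosed (0 < upperDensity ·) :=
  fun _ _ _ hA hAB => pos_of_mul_pos_right (hA.trans_le (upperDensity_le_mul hAB)) (by positivity)

theorem upperBanachDensity_bddShiftClosed : BddShiftClosed (0 < upperBanachDensity ·) :=
  fun _ _ _ hA hAB =>
    pos_of_mul_pos_right (hA.trans_le (upperBanachDensity_le_mul hAB)) (by positivity)

theorem mapClusterPt_inv_atTop_pow_of_norm_eq_one {𝕜 : Type*} [NormedField 𝕜] [ProperSpace 𝕜]
    {d : 𝕜} (hd : ‖d‖ = 1) : MapClusterPt d⁻¹ atTop (d ^ · : ℕ → 𝕜) := by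
  let u : Metric.sphere (0 : 𝕜) 1 := ⟨d, by simpa using hd⟩
  simpa [u, Function.comp_def] using
    (mapClusterPt_self_zpow_atTop_pow u (-1)).continuousAt_comp continuous_subtype_val.continuousAt

section ReturnPhases

variable {𝕜 : Type*} [NormedField 𝕜] {X : Type*} [TopologicalSpace X] {T : X → X} {a : 𝕜} {x : X}

def returnPhases (T : X → X) (a : 𝕜) (x : X) : Set 𝕜 :=
  {z | MapClusterPt z (comap (fun n => T^[n] x) (𝓝 x)) (a ^ ·)}

theorem mem_returnPhases_iff {z : 𝕜} :
    z ∈ returnPhases T a x ↔ ∀ B ∈ 𝓝 z, ∀ V ∈ 𝓝 x, ∃ n, T^[n] x ∈ V ∧ a ^ n ∈ B := by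
  simp only [returnPhases, mem_ofPred_eq, mapClusterPt_iff_frequently,
    ((𝓝 x).basis_sets.comap _).frequently_iff, mem_preimage, id]

theorem isClosed_returnPhases : IsClosed (returnPhases T a x) :=
  isClosed_setOfPred_clusterPt

theorem returnPhases_subset_sphere (ha : ‖a‖ = 1) : returnPhases T a x ⊆ Metric.sphere 0 1 :=
  fun _ hz => Metric.isClosed_sphere.mem_of_mapClusterPt hz (.of_forall fun n => by simp [ha])

theorem isCompact_returnPhases [ProperSpace 𝕜] (ha : ‖a‖ = 1) :
    IsCompact (returnPhases T a x) :=
  (isCompact_sphere 0 1).of_isClosed_subset isClosed_returnPhases (returnPhases_subset_sphere ha)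

theorem mul_mem_returnPhases (hT : Continuous T) {d e : 𝕜} (hd : d ∈ returnPhases T a x)
    (he : e ∈ returnPhases T a x) : d * e ∈ returnPhases T a x := by
  rw [mem_returnPhases_iff] at hd he ⊢
  intro B hB V hV
  obtain ⟨B₁, hB₁, B₂, hB₂, hB⟩ :=
    mem_nhds_prod_iff.1 (continuous_mul.continuousAt.preimage_mem_nhds (x := (d, e)) hB)
  obtain ⟨s, hs, hsB⟩ := hd B₁ hB₁ (interior V) (interior_mem_nhds.2 hV)
  obtain ⟨t, ht, htB⟩ := he B₂ hB₂ (T^[s] ⁻¹' interior V)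
    ((hT.iterate s).continuousAt.preimage_mem_nhds (isOpen_interior.mem_nhds hs))
  refine ⟨s + t, ?_, ?_⟩
  · rw [Function.iterate_add_apply]
    exact interior_subset ht
  · rw [pow_add]
    exact hB (mk_mem_prod hsB htB)

theorem pow_succ_mem_returnPhases (hT : Continuous T) {d : 𝕜} (hd : d ∈ returnPhases T a x)
    (n : ℕ) : d ^ (n + 1) ∈ returnPhases T a x := by
  induction n with
  | zero => simpa using hd
  | succ n ih => exact pow_succ d (n + 1) ▸ mul_mem_returnPhases hT ih hd

theorem inv_mem_returnPhases [ProperSpace 𝕜] (ha : ‖a‖ = 1) (hT : Continuous T) {d : 𝕜}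
    (hd : d ∈ returnPhases T a x) : d⁻¹ ∈ returnPhases T a x := by
  refine isClosed_returnPhases.mem_of_mapClusterPt
    (mapClusterPt_inv_atTop_pow_of_norm_eq_one (by simpa using returnPhases_subset_sphere ha hd))
    (eventually_atTop.2 ⟨1, fun n hn => ?_⟩)
  obtain ⟨k, rfl⟩ := Nat.exists_eq_add_of_le' hn
  exact pow_succ_mem_returnPhases hT hd k

theorem exists_iterate_mem_mul_pow_mem [ProperSpace 𝕜] (ha : ‖a‖ = 1) (hT : Continuous T)
    {d : 𝕜} (hd : d ∈ returnPhases T a x) {B : Set 𝕜} (hB : B ∈ 𝓝 1) {W : Set X}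
    (hW : W ∈ 𝓝 x) : ∃ s, T^[s] x ∈ W ∧ d * a ^ s ∈ B := by
  have hd0 : d ≠ 0 := ne_zero_of_mem_unit_sphere ⟨d, returnPhases_subset_sphere ha hd⟩
  have hB' : (d * ·) ⁻¹' B ∈ 𝓝 d⁻¹ :=
    (continuous_const_mul d).continuousAt.preimage_mem_nhds (by rwa [mul_inv_cancel₀ hd0])
  exact mem_returnPhases_iff.1 (inv_mem_returnPhases ha hT hd) _ hB' W hW

theorem exists_mem_nhds_forall_pow_mem [ProperSpace 𝕜] (ha : ‖a‖ = 1) {O : Set 𝕜}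
    (hO : IsOpen O) (hDO : returnPhases T a x ⊆ O) :
    ∃ V ∈ 𝓝 x, ∀ n, T^[n] x ∈ V → a ^ n ∈ O := by
  suffices ∀ᶠ n in comap (fun n => T^[n] x) (𝓝 x), a ^ n ∈ O by
    obtain ⟨V, hV, hVO⟩ := mem_comap.1 this
    exact ⟨V, hV, fun n hn => hVO hn⟩
  by_contra h
  obtain ⟨z, hz, hzD⟩ := ((isCompact_sphere 0 1).diff hO).exists_mapClusterPt_of_frequently
    ((not_eventually.1 h).mono fun n hn => ⟨by simp [ha], hn⟩)
  exact hz.2 (hDO hzD)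

end ReturnPhases

def IsFRecurrentVec {X : Type*} [TopologicalSpace X] (F : Set ℕ → Prop) (T : X → X) (x : X) :
    Prop :=
  ∀ U ∈ 𝓝 x, F (returnSet T x U)

section Operator

variable {𝕜 : Type*} [NormedField 𝕜] {X : Type*} [AddCommGroup X] [Module 𝕜 X]
  [TopologicalSpace X] [ContinuousSMul 𝕜 X]

theorem ContinuousLinearMap.iterate_smul_apply (T : X →L[𝕜] X) (a : 𝕜) (n : ℕ) (y : X) :
    (⇑(a • T))^[n] y = a ^ n • T^[n] y := by
  induction n with
  | zero => simp
  | succ n ih =>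
    rw [Function.iterate_succ_apply', ih, Function.iterate_succ_apply', smul_apply, map_smul,
      smul_smul, pow_succ']

variable [ProperSpace 𝕜]

theorem IsFRecurrentVec.smul {F : Set ℕ → Prop} (hF : BddShiftClosed F) {T : X →L[𝕜] X} {a : 𝕜}
    (ha : ‖a‖ = 1) {x : X} (hx : IsFRecurrentVec F T x) : IsFRecurrentVec F ⇑(a • T) x := by
  intro U hU
  obtain ⟨B, W, hBo, h1B, hWo, hxW, hBW⟩ := mem_nhds_prod_iff'.1
    (continuous_smul.continuousAt.preimage_mem_nhds (x := ((1 : 𝕜), x)) (by simpa using hU))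
  choose! s hsW hsB using fun d (hd : d ∈ returnPhases T a x) =>
    exists_iterate_mem_mul_pow_mem ha T.continuous hd (hBo.mem_nhds h1B) (hWo.mem_nhds hxW)
  obtain ⟨t, htD, hcover⟩ := (isCompact_returnPhases ha).elim_nhds_subcover
    (fun d => (· * a ^ s d) ⁻¹' B) fun d hd =>
      (continuous_mul_const _).continuousAt.preimage_mem_nhds (hBo.mem_nhds (hsB d hd))
  obtain ⟨V₀, hV₀, hV₀B⟩ := exists_mem_nhds_forall_pow_mem ha
    (isOpen_biUnion fun d _ => hBo.preimage (continuous_mul_const _)) hcover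
  have hV : V₀ ∩ ⋂ d ∈ t, T^[s d] ⁻¹' W ∈ 𝓝 x :=
    inter_mem hV₀ ((biInter_finset_mem t).2 fun d hd =>
      (T.continuous.iterate _).continuousAt.preimage_mem_nhds (hWo.mem_nhds (hsW d (htD d hd))))
  refine hF (t.sup s) _ _ (hx _ hV) fun n hn => ?_
  obtain ⟨d, hdt, hd⟩ := mem_iUnion₂.1 (hV₀B n hn.1)
  refine ⟨s d, Finset.le_sup hdt, ?_⟩
  show (⇑(a • T))^[n + s d] x ∈ U
  rw [T.iterate_smul_apply, pow_add, add_comm n, Function.iterate_add_apply]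
  exact hBW (mk_mem_prod hd (mem_iInter₂.1 hn.2 d hdt))

theorem isFRecurrentVec_smul_iff {F : Set ℕ → Prop} (hF : BddShiftClosed F) (T : X →L[𝕜] X)
    {a : 𝕜} (ha : ‖a‖ = 1) (x : X) :
    IsFRecurrentVec F (fun y => a • T y) x ↔ IsFRecurrentVec F T x := by
  refine ⟨fun h => ?_, fun h => h.smul hF ha⟩
  have ha0 : a ≠ 0 := norm_ne_zero_iff.1 (ha.symm ▸ one_ne_zero)
  simpa [smul_smul, inv_mul_cancel₀ ha0] using
    IsFRecurrentVec.smul hF (T := a • T) (a := a⁻¹) (by simp [ha]) h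

end Operator

theorem stmt12_general {𝕜 : Type*} [RCLike 𝕜] {X : Type*} [AddCommGroup X] [Module 𝕜 X]
    [TopologicalSpace X] [ContinuousSMul 𝕜 X] (T : X →L[𝕜] X) (a : 𝕜) (ha : ‖a‖ = 1) :
    (∀ x : X, IsUniformlyRecurrentVec (fun y => a • T y) x ↔
      IsUniformlyRecurrentVec (⇑T) x) ∧
    (∀ x : X, IsFrequentlyRecurrentVec (fun y => a • T y) x ↔
      IsFrequentlyRecurrentVec (⇑T) x) ∧
    (∀ x : X, IsUpperFrequentlyRecurrentVec (fun y => a • T y) x ↔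
      IsUpperFrequentlyRecurrentVec (⇑T) x) ∧
    (∀ x : X, IsReiterativelyRecurrentVec (fun y => a • T y) x ↔
      IsReiterativelyRecurrentVec (⇑T) x) ∧
    (Dense {x : X | IsUniformlyRecurrentVec (⇑T) x} →
      Dense {x : X | IsUniformlyRecurrentVec (fun y => a • T y) x}) ∧
    (Dense {x : X | IsFrequentlyRecurrentVec (⇑T) x} →
      Dense {x : X | IsFrequentlyRecurrentVec (fun y => a • T y) x}) ∧
    (Dense {x : X | IsUpperFrequentlyRecurrentVec (⇑T) x} →
      Dense {x : X | IsUpperFrequentlyRecurrentVec (fun y => a • T y) x}) ∧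
    (Dense {x : X | IsReiterativelyRecurrentVec (⇑T) x} →
      Dense {x : X | IsReiterativelyRecurrentVec (fun y => a • T y) x}) := by
  have h₁ := isFRecurrentVec_smul_iff syndetic_bddShiftClosed T ha
  have h₂ := isFRecurrentVec_smul_iff lowerDensity_bddShiftClosed T ha
  have h₃ := isFRecurrentVec_smul_iff upperDensity_bddShiftClosed T ha
  have h₄ := isFRecurrentVec_smul_iff upperBanachDensity_bddShiftClosed T ha
  exact ⟨h₁, h₂, h₃, h₄, fun h => h.mono fun x => (h₁ x).2, fun h => h.mono fun x => (h₂ x).2,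
    fun h => h.mono fun x => (h₃ x).2, fun h => h.mono fun x => (h₄ x).2⟩

theorem stmt12 {𝕜 : Type*} [RCLike 𝕜] {X : Type*} [AddCommGroup X] [Module 𝕜 X]
    [TopologicalSpace X] [IsTopologicalAddGroup X] [ContinuousSMul 𝕜 X] (T : X →L[𝕜] X) (a : 𝕜) (ha : ‖a‖ = 1) :
    (∀ x : X, IsUniformlyRecurrentVec (fun y => a • T y) x ↔
      IsUniformlyRecurrentVec (⇑T) x) ∧
    (∀ x : X, IsFrequentlyRecurrentVec (fun y => a • T y) x ↔
      IsFrequentlyRecurrentVec (⇑T) x) ∧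
    (∀ x : X, IsUpperFrequentlyRecurrentVec (fun y => a • T y) x ↔
      IsUpperFrequentlyRecurrentVec (⇑T) x) ∧
    (∀ x : X, IsReiterativelyRecurrentVec (fun y => a • T y) x ↔
      IsReiterativelyRecurrentVec (⇑T) x) ∧
    (Dense {x : X | IsUniformlyRecurrentVec (⇑T) x} →
      Dense {x : X | IsUniformlyRecurrentVec (fun y => a • T y) x}) ∧
    (Dense {x : X | IsFrequentlyRecurrentVec (⇑T) x} →
      Dense {x : X | IsFrequentlyRecurrentVec (fun y => a • T y) x}) ∧
    (Dense {x : X | IsUpperFrequentlyRecurrentVec (⇑T) x} →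
      Dense {x : X | IsUpperFrequentlyRecurrentVec (fun y => a • T y) x}) ∧
    (Dense {x : X | IsReiterativelyRecurrentVec (⇑T) x} →
      Dense {x : X | IsReiterativelyRecurrentVec (fun y => a • T y) x}) :=
  stmt12_general T a ha
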